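/- arXiv:2601.05845 — 2 statements merged into one kernel-verified Lean document; each statement's English description precedes it below -/
import Mathlib

section
/- Let y ∈ ℕⁿ be counts, X ∈ ℝ^{n×q} a nonnegative matrix, c > 0, α_c = max(1,c). The function β ↦ Σᵢ [yᵢ·log(exp(xᵢᵀβ/α_c) − 1) − c·exp(xᵢᵀβ/α_c)] is concave on the set of β ∈ ℝ^q with β ≥ 0 componentwise and xᵢᵀβ > 0 for all i. -/
/-!
Each summand is `y * g t - c * exp t` evaluated at the linear predictor `t = xᵢᵀβ / α_c`, where
`g t = log (exp t - 1)` is concave on `(0, ∞)` because `g' t = 1 + 1 / (exp t - 1)` decreases.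
Concavity survives composition with a linear map and finite sums, and the constraint set is an
intersection of a cone with open half-spaces, hence convex.
-/

open Real

lemma hasDerivAt_log_exp_sub_one {t : ℝ} (ht : 0 < t) :
    HasDerivAt (fun t => log (exp t - 1)) (1 + (exp t - 1)⁻¹) t := by
  have hpos : 0 < exp t - 1 := sub_pos.2 (one_lt_exp_iff.2 ht)
  convert ((hasDerivAt_exp t).sub_const 1).log hpos.ne' using 1
  field_simp
  ring

lemma concaveOn_log_exp_sub_one : ConcaveOn ℝ (Set.Ioi 0) (fun t => log (exp t - 1)) := by
  have hderiv (t : ℝ) (ht : t ∈ Set.Ioi 0) := hasDerivAt_log_exp_sub_one ht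
  refine AntitoneOn.concaveOn_of_deriv (convex_Ioi 0)
    (fun t ht => (hderiv t ht).continuousAt.continuousWithinAt) ?_ ?_ <;> rw [interior_Ioi]
  · exact fun t ht => (hderiv t ht).differentiableAt.differentiableWithinAt
  · intro a ha b hb hab
    rw [(hderiv a ha).deriv, (hderiv b hb).deriv]
    have : 0 < exp a - 1 := sub_pos.2 (one_lt_exp_iff.2 ha)
    gcongr

lemma concaveOn_mul_log_exp_sub_one_sub_mul_exp {y c : ℝ} (hy : 0 ≤ y) (hc : 0 ≤ c) :
    ConcaveOn ℝ (Set.Ioi 0) (fun t => y * log (exp t - 1) - c * exp t) :=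
  (concaveOn_log_exp_sub_one.smul hy).sub
    ((convexOn_exp.subset (Set.subset_univ _) (convex_Ioi 0)).smul hc)

theorem ConcaveOn.sum {𝕜 E β ι : Type*} [Semiring 𝕜] [PartialOrder 𝕜] [AddCommMonoid E]
    [AddCommMonoid β] [PartialOrder β] [IsOrderedAddMonoid β] [SMul 𝕜 E] [Module 𝕜 β]
    {s : Set E} (hs : Convex 𝕜 s) {t : Finset ι} {f : ι → E → β}
    (hf : ∀ i ∈ t, ConcaveOn 𝕜 s (f i)) :
    ConcaveOn 𝕜 s (fun x => ∑ i ∈ t, f i x) := by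
  classical
  induction t using Finset.induction_on with
  | empty => simpa using concaveOn_const 0 hs
  | insert i t hi ih =>
    simp only [Finset.sum_insert hi]
    exact (hf i (t.mem_insert_self i)).add (ih fun j hj => hf j (Finset.mem_insert_of_mem hj))

lemma convex_setOf_nonneg_and_sum_mul_pos {ι κ : Type*} [Fintype κ] (X : ι → κ → ℝ) :
    Convex ℝ {β : κ → ℝ | (∀ j, 0 ≤ β j) ∧ ∀ i, 0 < ∑ j, X i j * β j} := by
  have hset : {β : κ → ℝ | (∀ j, 0 ≤ β j) ∧ ∀ i, 0 < ∑ j, X i j * β j} =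
      Set.Ici 0 ∩ ⋂ i, dotProductBilin ℝ ℝ (X i) ⁻¹' Set.Ioi 0 := by
    ext β
    simp [Pi.le_def, dotProduct]
  rw [hset]
  exact (convex_Ici 0).inter (convex_iInter fun i => (convex_Ioi 0).linear_preimage _)

theorem stmt_4_general (n q : ℕ) (y : Fin n → ℕ) (X : Fin n → Fin q → ℝ)
    (c : ℝ) (hc : 0 < c) :
    ConcaveOn ℝ
      {β : Fin q → ℝ | (∀ j, 0 ≤ β j) ∧ ∀ i, 0 < ∑ j, X i j * β j}
      (fun β : Fin q → ℝ =>
        ∑ i, ((y i : ℝ) * Real.log (Real.exp ((∑ j, X i j * β j) / max 1 c) - 1)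
          - c * Real.exp ((∑ j, X i j * β j) / max 1 c))) := by
  have hα : 0 < max 1 c := lt_max_of_lt_left one_pos
  let predictor (i : Fin n) : (Fin q → ℝ) →ₗ[ℝ] ℝ := (max 1 c)⁻¹ • dotProductBilin ℝ ℝ (X i)
  have hpredictor (i : Fin n) (β : Fin q → ℝ) :
      predictor i β = (∑ j, X i j * β j) / max 1 c := by
    simp [predictor, dotProduct, div_eq_inv_mul]
  have hS := convex_setOf_nonneg_and_sum_mul_pos X
  refine ConcaveOn.sum hS fun i _ => ?_
  have := ((concaveOn_mul_log_exp_sub_one_sub_mul_exp (y i).cast_nonneg hc.le).comp_linearMap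
    (predictor i)).subset (fun β hβ => ?_) hS
  · simpa only [Function.comp_def, hpredictor] using this
  · simp only [Set.mem_preimage, Set.mem_Ioi, hpredictor]
    exact div_pos (hβ.2 i) hα

/-- Concavity of the Poisson regression log-likelihood with shifted-log link and
nonnegativity-constrained coefficients. -/
theorem stmt_4 (n q : ℕ) (y : Fin n → ℕ) (X : Fin n → Fin q → ℝ)
    (hX : ∀ i j, 0 ≤ X i j) (c : ℝ) (hc : 0 < c) :
    ConcaveOn ℝ
      {β : Fin q → ℝ | (∀ j, 0 ≤ β j) ∧ ∀ i, 0 < ∑ j, X i j * β j}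
      (fun β : Fin q → ℝ =>
        ∑ i, ((y i : ℝ) * Real.log (Real.exp ((∑ j, X i j * β j) / max 1 c) - 1)
          - c * Real.exp ((∑ j, X i j * β j) / max 1 c))) :=
  stmt_4_general n q y X c hc
end

section
/- Let η ∈ ℝ^p with all η_j > 0, and define λ_j = (exp(η_j) − 1)/Σ_{j'=1}^p (exp(η_{j'}) − 1) and σ_j = exp(η_j)/Σ_{j'} exp(η_{j'}). Let η_max = max_j η_j. Then |λ_j − σ_j| ≤ C·p·exp(−η_max) for some constant C independent of η once η_max is sufficiently large; in particular λ_j − σ_j → 0 uniformly in j as η_max → ∞ (with p fixed). -/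
open Real

/-- Softmax approximation: for η with positive entries, the normalized values
λⱼ = (exp(ηⱼ)−1)/Σ(exp(η_{j'})−1) differ from the softmax σⱼ by at most
C·p·exp(−η_max), uniformly in j, once η_max is sufficiently large. -/
theorem stmt_9 (p : ℕ) (hp : 0 < p) :
    ∃ C > (0 : ℝ), ∃ M : ℝ, ∀ η : Fin p → ℝ, (∀ j, 0 < η j) →
      ∀ ηmax : ℝ, IsGreatest (Set.range η) ηmax → M ≤ ηmax →
      ∀ j, |(Real.exp (η j) - 1) / (∑ j', (Real.exp (η j') - 1))
              - Real.exp (η j) / (∑ j', Real.exp (η j'))|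
            ≤ C * p * Real.exp (-ηmax) := by
  refine ⟨4, by norm_num, 1, ?_⟩
  intro η hη ηmax hmax hM j
  obtain ⟨⟨j0, hj0⟩, hub⟩ := hmax
  set E := Real.exp ηmax with hE
  set S := ∑ j', Real.exp (η j') with hS
  have hub' : ∀ i, Real.exp (η i) ≤ E := fun i =>
    Real.exp_le_exp.2 (hub ⟨i, rfl⟩)
  have hSle : S ≤ p * E := by
    calc S ≤ ∑ _j' : Fin p, E := Finset.sum_le_sum fun i _ => hub' i
    _ = p * E := by simp [mul_comm]
  have hSge : E ≤ S := by
    rw [hE, ← hj0]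
    exact Finset.single_le_sum (fun i _ => (Real.exp_pos _).le) (Finset.mem_univ j0)
  have hEpos : 0 < E := Real.exp_pos _
  have hSpos : 0 < S := lt_of_lt_of_le hEpos hSge
  have hT : (∑ j', (Real.exp (η j') - 1)) = S - p := by
    rw [Finset.sum_sub_distrib]; simp [hS]
  have hE2 : (2:ℝ) ≤ E := by
    have h1 : (2:ℝ) ≤ Real.exp 1 := by
      have := Real.add_one_le_exp 1; linarith
    exact h1.trans (Real.exp_le_exp.2 hM)
  have hTge : E / 2 ≤ S - p := by
    have h1 : E - 1 ≤ ∑ j', (Real.exp (η j') - 1) := by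
      rw [hE, ← hj0]
      refine Finset.single_le_sum (f := fun i => Real.exp (η i) - 1) (fun i _ => ?_) (Finset.mem_univ j0)
      have := Real.add_one_le_exp (η i)
      have := hη i
      linarith
    rw [hT] at h1
    linarith
  have hTpos : 0 < S - p := lt_of_lt_of_le (by linarith) hTge
  have hej : 0 < Real.exp (η j) := Real.exp_pos _
  have key : (Real.exp (η j) - 1) / (S - p) - Real.exp (η j) / S
      = (p * Real.exp (η j) - S) / ((S - p) * S) := by
    field_simp
    ring
  rw [hT, key, Real.exp_neg, abs_div, abs_of_pos (mul_pos hTpos hSpos)]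
  have hnum : |p * Real.exp (η j) - S| ≤ 2 * p * E := by
    have h1 : (p:ℝ) * Real.exp (η j) ≤ p * E := by
      have := hub' j
      have : (0:ℝ) ≤ p := Nat.cast_nonneg p
      nlinarith [hub' j]
    have hpE : (0:ℝ) ≤ (p:ℝ) * E := by positivity
    have hpej : (0:ℝ) ≤ (p:ℝ) * Real.exp (η j) := by positivity
    rw [abs_le]
    constructor <;> linarith
  rw [div_le_iff₀ (by positivity)]
  have hden : E / 2 * E ≤ (S - p) * S := by
    apply mul_le_mul hTge hSge (le_of_lt hEpos) (le_of_lt hTpos)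
  calc |p * Real.exp (η j) - S| ≤ 2 * p * E := hnum
  _ ≤ 4 * p * E⁻¹ * ((S - p) * S) := by
      have hp' : (0:ℝ) < p := Nat.cast_pos.2 hp
      have h2 : 4 * (p:ℝ) * E⁻¹ * (E / 2 * E) = 2 * p * E := by
        field_simp; ring
      calc (2:ℝ) * p * E = 4 * p * E⁻¹ * (E / 2 * E) := h2.symm
      _ ≤ 4 * p * E⁻¹ * ((S - p) * S) := by
          apply mul_le_mul_of_nonneg_left hden (by positivity)
end
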